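/- Let μ be real-valued in W^{1,∞}(𝔻) with ‖μ‖_{L^∞} ≤ c < 1 and α := −(1/(1−μ²))∂̄μ. For 0 < p < ∞, f belongs to the bicomplex conjugate-Beltrami–Hardy class H^p_{conj,μ}(𝔻,𝔹) if and only if w := (1−μ²)^{-1/2}(f − μ f̄) belongs to the bicomplex Vekua–Hardy class H^p_{0,α}(𝔻,𝔹); in particular the Hardy-type size condition sup_{0<r<1}∫₀^{2π}‖·(re^{iθ})‖_𝔹^p dθ < ∞ is preserved in both directions since ‖f − μf̄‖ and ‖w + μw̄‖ are controlled by (1−μ²)^{-1/2}(1+|μ|) times the norms of f and w respectively. -/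

import Mathlib

open Complex MeasureTheory Metric Set Filter

noncomputable section

/-- The bicomplex numbers: `z₁ + j z₂` with `z₁, z₂ ∈ ℂ`, `j² = -1`. -/
structure Bicomplex where
  z1 : ℂ
  z2 : ℂ

namespace Bicomplex

@[ext] theorem ext' {u v : Bicomplex} (h1 : u.z1 = v.z1) (h2 : u.z2 = v.z2) : u = v := by
  cases u; cases v; simp_all

instance : Add Bicomplex := ⟨fun u v => ⟨u.z1 + v.z1, u.z2 + v.z2⟩⟩
instance : Mul Bicomplex := ⟨fun u v => ⟨u.z1 * v.z1 - u.z2 * v.z2, u.z1 * v.z2 + u.z2 * v.z1⟩⟩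
instance : Zero Bicomplex := ⟨⟨0, 0⟩⟩
instance : One Bicomplex := ⟨⟨1, 0⟩⟩
instance : Neg Bicomplex := ⟨fun u => ⟨-u.z1, -u.z2⟩⟩

@[simp] theorem add_z1 (u v : Bicomplex) : (u + v).z1 = u.z1 + v.z1 := rfl
@[simp] theorem add_z2 (u v : Bicomplex) : (u + v).z2 = u.z2 + v.z2 := rfl
@[simp] theorem mul_z1 (u v : Bicomplex) : (u * v).z1 = u.z1 * v.z1 - u.z2 * v.z2 := rfl
@[simp] theorem mul_z2 (u v : Bicomplex) : (u * v).z2 = u.z1 * v.z2 + u.z2 * v.z1 := rfl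
@[simp] theorem zero_z1 : (0 : Bicomplex).z1 = 0 := rfl
@[simp] theorem zero_z2 : (0 : Bicomplex).z2 = 0 := rfl
@[simp] theorem one_z1 : (1 : Bicomplex).z1 = 1 := rfl
@[simp] theorem one_z2 : (1 : Bicomplex).z2 = 0 := rfl
@[simp] theorem neg_z1 (u : Bicomplex) : (-u).z1 = -u.z1 := rfl
@[simp] theorem neg_z2 (u : Bicomplex) : (-u).z2 = -u.z2 := rfl

instance : CommRing Bicomplex where
  add := (· + ·)
  add_assoc := by intros; ext <;> simp <;> ring
  zero := 0
  zero_add := by intros; ext <;> simp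
  add_zero := by intros; ext <;> simp
  add_comm := by intros; ext <;> simp <;> ring
  mul := (· * ·)
  mul_assoc := by intros; ext <;> simp <;> ring
  one := 1
  one_mul := by intros; ext <;> simp
  mul_one := by intros; ext <;> simp
  left_distrib := by intros; ext <;> simp <;> ring
  right_distrib := by intros; ext <;> simp <;> ring
  zero_mul := by intros; ext <;> simp
  mul_zero := by intros; ext <;> simp
  neg := Neg.neg
  neg_add_cancel := by intros; ext <;> simp
  mul_comm := by intros; ext <;> simp <;> ring
  nsmul := nsmulRec
  zsmul := zsmulRec

/-- The bicomplex imaginary unit `j`. -/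
def j : Bicomplex := ⟨0, 1⟩

/-- Embedding of `ℂ` into the bicomplex numbers. -/
def ofC (z : ℂ) : Bicomplex := ⟨z, 0⟩

/-- The idempotent `p⁺ = (1 + j i)/2`. -/
def pp : Bicomplex := ⟨1 / 2, Complex.I / 2⟩

/-- The idempotent `p⁻ = (1 - j i)/2`. -/
def pm : Bicomplex := ⟨1 / 2, -(Complex.I / 2)⟩

/-- Idempotent component `w⁺ = z₁ - i z₂`. -/
def plus (w : Bicomplex) : ℂ := w.z1 - Complex.I * w.z2

/-- Idempotent component `w⁻ = z₁ + i z₂`. -/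
def minus (w : Bicomplex) : ℂ := w.z1 + Complex.I * w.z2

/-- Bicomplex conjugation `z₁ + j z₂ ↦ z₁ - j z₂`. -/
def bconj (w : Bicomplex) : Bicomplex := ⟨w.z1, -w.z2⟩

/-- The bicomplex norm `‖w‖_𝔹 = sqrt((|w⁺|² + |w⁻|²)/2)`. -/
def bnorm (w : Bicomplex) : ℝ :=
  Real.sqrt ((‖plus w‖ ^ 2 + ‖minus w‖ ^ 2) / 2)

/-- The bicomplexification `ẑ* = x - j y` of `z* = x - i y` for `z = x + i y`. -/
def hatStar (z : ℂ) : Bicomplex := ⟨(z.re : ℂ), -(z.im : ℂ)⟩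

/-- Complex Wirtinger derivative `∂f/∂z`. -/
def wz (f : ℂ → ℂ) (z : ℂ) : ℂ :=
  (fderiv ℝ f z 1 - Complex.I * fderiv ℝ f z Complex.I) / 2

/-- Complex Wirtinger derivative `∂f/∂z*`. -/
def wzbar (f : ℂ → ℂ) (z : ℂ) : ℂ :=
  (fderiv ℝ f z 1 + Complex.I * fderiv ℝ f z Complex.I) / 2

/-- Partial derivative in `x` of a bicomplex-valued function. -/
def dx (f : ℂ → Bicomplex) (z : ℂ) : Bicomplex :=
  ⟨fderiv ℝ (fun t => (f t).z1) z 1, fderiv ℝ (fun t => (f t).z2) z 1⟩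

/-- Partial derivative in `y` of a bicomplex-valued function. -/
def dy (f : ℂ → Bicomplex) (z : ℂ) : Bicomplex :=
  ⟨fderiv ℝ (fun t => (f t).z1) z Complex.I, fderiv ℝ (fun t => (f t).z2) z Complex.I⟩

/-- The bicomplex operator `∂ = (1/2)(∂ₓ - j ∂_y)`. -/
def bd (f : ℂ → Bicomplex) (z : ℂ) : Bicomplex := ofC (1 / 2) * (dx f z - j * dy f z)

/-- The bicomplex operator `∂̄ = (1/2)(∂ₓ + j ∂_y)`. -/
def bdbar (f : ℂ → Bicomplex) (z : ℂ) : Bicomplex := ofC (1 / 2) * (dx f z + j * dy f z)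

/-- Real differentiability of a bicomplex-valued function at a point. -/
def BDiffAt (f : ℂ → Bicomplex) (z : ℂ) : Prop :=
  DifferentiableAt ℝ (fun t => (f t).z1) z ∧ DifferentiableAt ℝ (fun t => (f t).z2) z

/-- `C^n`-smoothness of a bicomplex-valued function on a set. -/
def BContDiffOn (n : ℕ∞) (f : ℂ → Bicomplex) (s : Set ℂ) : Prop :=
  ContDiffOn ℝ n (fun t => (f t).z1) s ∧ ContDiffOn ℝ n (fun t => (f t).z2) s


/-- The point `r e^{iθ}` in the disk. -/
def circleAt (r θ : ℝ) : ℂ := (r : ℂ) * Complex.exp (θ * Complex.I)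

/-- Finiteness of the Hardy norm for a complex-valued function on the disk. -/
def HardyBddC (p : ℝ) (f : ℂ → ℂ) : Prop :=
  ∃ M : ℝ, ∀ r ∈ Set.Ioo (0:ℝ) 1,
    (∫ θ in (0:ℝ)..(2 * Real.pi), ‖f (circleAt r θ)‖ ^ p) ≤ M

/-- Finiteness of the Hardy norm for a bicomplex-valued function on the disk. -/
def HardyBddB (p : ℝ) (f : ℂ → Bicomplex) : Prop :=
  ∃ M : ℝ, ∀ r ∈ Set.Ioo (0:ℝ) 1,
    (∫ θ in (0:ℝ)..(2 * Real.pi), bnorm (f (circleAt r θ)) ^ p) ≤ M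

/-- The bicomplex function `p⁺ w⁺ + p⁻ w⁻` built from complex components. -/
def idem (wp wm : ℂ → ℂ) : ℂ → Bicomplex := fun t => pp * ofC (wp t) + pm * ofC (wm t)

/-- The complex Beltrami operator `∂/∂z* - μ ∂/∂z`. -/
def belOp (μ : ℂ → ℂ) (f : ℂ → ℂ) : ℂ → ℂ := fun z => wzbar f z - μ z * wz f z

/-- The bicomplex Beltrami operator `∂̄ - μ ∂`. -/
def bbelOp (μ : ℂ → Bicomplex) (f : ℂ → Bicomplex) : ℂ → Bicomplex :=
  fun z => bdbar f z - μ z * bd f z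

/-- A Stolz (nontangential approach) region at a boundary point `ζ` with aperture `a`. -/
def stolz (ζ : ℂ) (a : ℝ) : Set ℂ :=
  {z : ℂ | ‖z‖ < 1 ∧ ‖z - ζ‖ < a * (1 - ‖z‖)}

/-- Nontangential limit of a complex-valued function at a boundary point. -/
def NTLimC (f : ℂ → ℂ) (ζ L : ℂ) : Prop :=
  ∀ a : ℝ, 1 < a → Filter.Tendsto f (nhdsWithin ζ (stolz ζ a)) (nhds L)

/-- Nontangential limit of a bicomplex-valued function at a boundary point. -/
def NTLimB (f : ℂ → Bicomplex) (ζ : ℂ) (L : Bicomplex) : Prop :=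
  ∀ a : ℝ, 1 < a → Filter.Tendsto (fun z => bnorm (f z - L)) (nhdsWithin ζ (stolz ζ a)) (nhds 0)

end Bicomplex

open Bicomplex
section Aux

lemma bnorm_eq_sqrt (u : Bicomplex) :
    bnorm u = Real.sqrt (‖u.z1‖ ^ 2 + ‖u.z2‖ ^ 2) := by
  unfold bnorm plus minus
  congr 1
  rw [Complex.sq_norm, Complex.sq_norm, Complex.sq_norm, Complex.sq_norm]
  simp [Complex.normSq_apply]
  ring

lemma bnorm_nonneg (u : Bicomplex) : 0 ≤ bnorm u := Real.sqrt_nonneg _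

lemma bdbar_apply (g : ℂ → Bicomplex) (z : ℂ) :
    bdbar g z = ⟨(fderiv ℝ (fun t => (g t).z1) z 1 - fderiv ℝ (fun t => (g t).z2) z Complex.I) / 2,
      (fderiv ℝ (fun t => (g t).z2) z 1 + fderiv ℝ (fun t => (g t).z1) z Complex.I) / 2⟩ := by
  ext <;> simp [bdbar, dx, dy, j, ofC] <;> ring

end Aux
section Aux2

lemma sqrt_comb {x y A B K : ℝ} (hA : 0 ≤ A) (hB : 0 ≤ B) (hAK : A ≤ K) (hBK : B ≤ K)
    (hx : 0 ≤ x) (hy : 0 ≤ y) :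
    Real.sqrt ((A * x) ^ 2 + (B * y) ^ 2) ≤ K * Real.sqrt (x ^ 2 + y ^ 2) := by
  have hK : 0 ≤ K := le_trans hA hAK
  have h1 : (A * x) ^ 2 + (B * y) ^ 2 ≤ K ^ 2 * (x ^ 2 + y ^ 2) := by
    have hA2 : A ^ 2 ≤ K ^ 2 := pow_le_pow_left₀ hA hAK 2
    have hB2 : B ^ 2 ≤ K ^ 2 := pow_le_pow_left₀ hB hBK 2
    nlinarith [mul_le_mul_of_nonneg_right hA2 (sq_nonneg x),
      mul_le_mul_of_nonneg_right hB2 (sq_nonneg y)]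
  calc Real.sqrt ((A * x) ^ 2 + (B * y) ^ 2) ≤ Real.sqrt (K ^ 2 * (x ^ 2 + y ^ 2)) :=
        Real.sqrt_le_sqrt h1
    _ = K * Real.sqrt (x ^ 2 + y ^ 2) := by
        rw [Real.sqrt_mul (sq_nonneg K), Real.sqrt_sq hK]

lemma hasDerivAt_q1 (m : ℝ) (hm : m ^ 2 < 1) :
    HasDerivAt (fun t : ℝ => (Real.sqrt (1 - t ^ 2))⁻¹ * (1 - t))
      (-((Real.sqrt (1 - m ^ 2))⁻¹ * (1 - m) * (1 - m ^ 2)⁻¹)) m := by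
  have h1 : (0:ℝ) < 1 - m ^ 2 := by linarith
  have hS : 0 < Real.sqrt (1 - m ^ 2) := Real.sqrt_pos.2 h1
  have hS2 : Real.sqrt (1 - m ^ 2) ^ 2 = 1 - m ^ 2 := Real.sq_sqrt h1.le
  have hin : HasDerivAt (fun t : ℝ => 1 - t ^ 2) (-(2 * m)) m := by
    simpa using ((hasDerivAt_pow 2 m).const_sub 1)
  have hsq : HasDerivAt (fun t : ℝ => Real.sqrt (1 - t ^ 2))
      (-(2 * m) / (2 * Real.sqrt (1 - m ^ 2))) m :=
    (Real.hasDerivAt_sqrt h1.ne').comp m hin |>.congr_deriv (by ring)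
  have hinv : HasDerivAt (fun t : ℝ => (Real.sqrt (1 - t ^ 2))⁻¹)
      (-(-(2 * m) / (2 * Real.sqrt (1 - m ^ 2))) / (Real.sqrt (1 - m ^ 2)) ^ 2) m :=
    hsq.inv hS.ne'
  have hlin : HasDerivAt (fun t : ℝ => 1 - t) (-1 : ℝ) m := by
    simpa using (hasDerivAt_id m).const_sub 1
  have := hinv.mul hlin
  refine this.congr_deriv ?_
  field_simp
  linear_combination (m ^ 2 - m) * hS2

lemma hasDerivAt_q2 (m : ℝ) (hm : m ^ 2 < 1) :
    HasDerivAt (fun t : ℝ => (Real.sqrt (1 - t ^ 2))⁻¹ * (1 + t))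
      ((Real.sqrt (1 - m ^ 2))⁻¹ * (1 + m) * (1 - m ^ 2)⁻¹) m := by
  have h1 : (0:ℝ) < 1 - m ^ 2 := by linarith
  have hS : 0 < Real.sqrt (1 - m ^ 2) := Real.sqrt_pos.2 h1
  have hS2 : Real.sqrt (1 - m ^ 2) ^ 2 = 1 - m ^ 2 := Real.sq_sqrt h1.le
  have hin : HasDerivAt (fun t : ℝ => 1 - t ^ 2) (-(2 * m)) m := by
    simpa using ((hasDerivAt_pow 2 m).const_sub 1)
  have hsq : HasDerivAt (fun t : ℝ => Real.sqrt (1 - t ^ 2))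
      (-(2 * m) / (2 * Real.sqrt (1 - m ^ 2))) m :=
    (Real.hasDerivAt_sqrt h1.ne').comp m hin |>.congr_deriv (by ring)
  have hinv : HasDerivAt (fun t : ℝ => (Real.sqrt (1 - t ^ 2))⁻¹)
      (-(-(2 * m) / (2 * Real.sqrt (1 - m ^ 2))) / (Real.sqrt (1 - m ^ 2)) ^ 2) m :=
    hsq.inv hS.ne'
  have hlin : HasDerivAt (fun t : ℝ => 1 + t) (1 : ℝ) m := by
    simpa using (hasDerivAt_id m).const_add 1
  have := hinv.mul hlin
  refine this.congr_deriv ?_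
  field_simp
  linear_combination (-(m ^ 2 + m)) * hS2

end Aux2
section Key

variable (μ : ℂ → ℝ) (f : ℂ → Bicomplex) (z : ℂ)

lemma bdbar_bconj_eq (hf2 : DifferentiableAt ℝ (fun t => (f t).z2) z) :
    bdbar (fun t => bconj (f t)) z =
      ⟨(fderiv ℝ (fun t => (f t).z1) z 1 + fderiv ℝ (fun t => (f t).z2) z Complex.I) / 2,
       (-(fderiv ℝ (fun t => (f t).z2) z 1) + fderiv ℝ (fun t => (f t).z1) z Complex.I) / 2⟩ := by
  rw [bdbar_apply]
  have e1 : (fun t => ((fun t => bconj (f t)) t).z1) = (fun t => (f t).z1) := rfl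
  have e2 : (fun t => ((fun t => bconj (f t)) t).z2) = (fun t => -(f t).z2) := rfl
  rw [e1, e2, fderiv_fun_neg]
  ext <;> simp <;> ring

lemma bdbar_f_eq :
    bdbar f z =
      ⟨(fderiv ℝ (fun t => (f t).z1) z 1 - fderiv ℝ (fun t => (f t).z2) z Complex.I) / 2,
       (fderiv ℝ (fun t => (f t).z2) z 1 + fderiv ℝ (fun t => (f t).z1) z Complex.I) / 2⟩ :=
  bdbar_apply f z

end Key
section Key2

variable (μ : ℂ → ℝ) (f : ℂ → Bicomplex) (z : ℂ)

lemma bdbar_mu_eq (hμ : DifferentiableAt ℝ μ z) :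
    bdbar (fun t => ofC ((μ t : ℝ) : ℂ)) z =
      ⟨((fderiv ℝ μ z 1 : ℝ) : ℂ) / 2, ((fderiv ℝ μ z Complex.I : ℝ) : ℂ) / 2⟩ := by
  rw [bdbar_apply]
  have e1 : (fun t => ((fun t => ofC ((μ t : ℝ) : ℂ)) t).z1) = (fun t => ((μ t : ℝ) : ℂ)) := rfl
  have e2 : (fun t => ((fun t => ofC ((μ t : ℝ) : ℂ)) t).z2) = (fun _ => (0 : ℂ)) := rfl
  have hd : HasFDerivAt (fun t => ((μ t : ℝ) : ℂ))
      (Complex.ofRealCLM.comp (fderiv ℝ μ z)) z :=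
    (Complex.ofRealCLM.hasFDerivAt).comp z hμ.hasFDerivAt
  rw [e1, e2, hd.fderiv]
  ext <;> simp <;> ring

-- component functions of W
lemma W_z1_eq : (fun t => ((fun t => ofC ((Real.sqrt (1 - μ t ^ 2))⁻¹ : ℂ)
      * (f t - ofC (μ t : ℂ) * bconj (f t))) t).z1)
    = fun t => ((((Real.sqrt (1 - μ t ^ 2))⁻¹ * (1 - μ t) : ℝ) : ℂ) * (f t).z1) := by
  funext t
  simp only [mul_z1, sub_eq_add_neg, add_z1, neg_z1, mul_z1]
  simp [ofC, bconj]
  push_cast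
  ring

lemma W_z2_eq : (fun t => ((fun t => ofC ((Real.sqrt (1 - μ t ^ 2))⁻¹ : ℂ)
      * (f t - ofC (μ t : ℂ) * bconj (f t))) t).z2)
    = fun t => ((((Real.sqrt (1 - μ t ^ 2))⁻¹ * (1 + μ t) : ℝ) : ℂ) * (f t).z2) := by
  funext t
  simp only [mul_z2, sub_eq_add_neg, add_z2, neg_z2, mul_z1, mul_z2]
  simp [ofC, bconj]
  push_cast
  ring

end Key2
section Key3

variable (μ : ℂ → ℝ) (f : ℂ → Bicomplex) (z : ℂ)

lemma W_z1_fderiv (hμ : DifferentiableAt ℝ μ z) (hm : (μ z) ^ 2 < 1)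
    (hf1 : DifferentiableAt ℝ (fun t => (f t).z1) z) (v : ℂ) :
    fderiv ℝ (fun t => ((((Real.sqrt (1 - μ t ^ 2))⁻¹ * (1 - μ t) : ℝ) : ℂ) * (f t).z1)) z v
      = (((Real.sqrt (1 - μ z ^ 2))⁻¹ * (1 - μ z) : ℝ) : ℂ) * fderiv ℝ (fun t => (f t).z1) z v
        + (f z).z1 * ((-((Real.sqrt (1 - μ z ^ 2))⁻¹ * (1 - μ z) * (1 - μ z ^ 2)⁻¹)
            * fderiv ℝ μ z v : ℝ) : ℂ) := by
  have hq : HasFDerivAt (fun t : ℂ => ((Real.sqrt (1 - μ t ^ 2))⁻¹ * (1 - μ t) : ℝ))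
      ((-((Real.sqrt (1 - μ z ^ 2))⁻¹ * (1 - μ z) * (1 - μ z ^ 2)⁻¹)) • fderiv ℝ μ z) z :=
    (hasDerivAt_q1 (μ z) hm).comp_hasFDerivAt z hμ.hasFDerivAt
  have hA : HasFDerivAt (fun t : ℂ => ((((Real.sqrt (1 - μ t ^ 2))⁻¹ * (1 - μ t) : ℝ)) : ℂ))
      (Complex.ofRealCLM.comp ((-((Real.sqrt (1 - μ z ^ 2))⁻¹ * (1 - μ z) * (1 - μ z ^ 2)⁻¹))
        • fderiv ℝ μ z)) z :=
    (Complex.ofRealCLM.hasFDerivAt).comp z hq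
  have hprod := hA.fun_mul hf1.hasFDerivAt
  rw [hprod.fderiv]
  simp [Complex.real_smul]
  try push_cast
  try ring

lemma W_z2_fderiv (hμ : DifferentiableAt ℝ μ z) (hm : (μ z) ^ 2 < 1)
    (hf2 : DifferentiableAt ℝ (fun t => (f t).z2) z) (v : ℂ) :
    fderiv ℝ (fun t => ((((Real.sqrt (1 - μ t ^ 2))⁻¹ * (1 + μ t) : ℝ) : ℂ) * (f t).z2)) z v
      = (((Real.sqrt (1 - μ z ^ 2))⁻¹ * (1 + μ z) : ℝ) : ℂ) * fderiv ℝ (fun t => (f t).z2) z v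
        + (f z).z2 * ((((Real.sqrt (1 - μ z ^ 2))⁻¹ * (1 + μ z) * (1 - μ z ^ 2)⁻¹)
            * fderiv ℝ μ z v : ℝ) : ℂ) := by
  have hq : HasFDerivAt (fun t : ℂ => ((Real.sqrt (1 - μ t ^ 2))⁻¹ * (1 + μ t) : ℝ))
      (((Real.sqrt (1 - μ z ^ 2))⁻¹ * (1 + μ z) * (1 - μ z ^ 2)⁻¹) • fderiv ℝ μ z) z :=
    (hasDerivAt_q2 (μ z) hm).comp_hasFDerivAt z hμ.hasFDerivAt
  have hA : HasFDerivAt (fun t : ℂ => ((((Real.sqrt (1 - μ t ^ 2))⁻¹ * (1 + μ t) : ℝ)) : ℂ))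
      (Complex.ofRealCLM.comp ((((Real.sqrt (1 - μ z ^ 2))⁻¹ * (1 + μ z) * (1 - μ z ^ 2)⁻¹))
        • fderiv ℝ μ z)) z :=
    (Complex.ofRealCLM.hasFDerivAt).comp z hq
  have hprod := hA.fun_mul hf2.hasFDerivAt
  rw [hprod.fderiv]
  simp [Complex.real_smul]
  try push_cast
  try ring

end Key3
lemma beq_iff (u v : Bicomplex) : u = v ↔ (u.z1 = v.z1 ∧ u.z2 = v.z2) :=
  ⟨fun h => by rw [h]; exact ⟨rfl, rfl⟩, fun h => Bicomplex.ext' h.1 h.2⟩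

section KeyMain

variable (μ : ℂ → ℝ) (f : ℂ → Bicomplex) (z : ℂ)

lemma key (hμ : DifferentiableAt ℝ μ z) (hm : (μ z) ^ 2 < 1)
    (hf1 : DifferentiableAt ℝ (fun t => (f t).z1) z)
    (hf2 : DifferentiableAt ℝ (fun t => (f t).z2) z) :
    (bdbar f z = ofC (μ z : ℂ) * bdbar (fun t => bconj (f t)) z) ↔
    (bdbar (fun t => ofC ((Real.sqrt (1 - μ t ^ 2))⁻¹ : ℂ)
        * (f t - ofC (μ t : ℂ) * bconj (f t))) z
      = (-(ofC (((1 - μ z ^ 2)⁻¹ : ℝ) : ℂ)) * bdbar (fun t => ofC (μ t : ℂ)) z)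
        * bconj (ofC ((Real.sqrt (1 - μ z ^ 2))⁻¹ : ℂ)
          * (f z - ofC (μ z : ℂ) * bconj (f z)))) := by
  rw [beq_iff, beq_iff]
  rw [bdbar_f_eq, bdbar_bconj_eq f z hf2]
  rw [bdbar_apply (fun t => ofC ((Real.sqrt (1 - μ t ^ 2))⁻¹ : ℂ)
        * (f t - ofC (μ t : ℂ) * bconj (f t))) z]
  rw [W_z1_eq μ f, W_z2_eq μ f, bdbar_mu_eq μ z hμ]
  rw [W_z1_fderiv μ f z hμ hm hf1 1, W_z1_fderiv μ f z hμ hm hf1 Complex.I,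
      W_z2_fderiv μ f z hμ hm hf2 1, W_z2_fderiv μ f z hμ hm hf2 Complex.I]
  simp only [ofC, bconj, mul_z1, mul_z2, neg_z1, neg_z2, sub_eq_add_neg, add_z1, add_z2]
  push_cast
  have hSpos : (0:ℝ) < Real.sqrt (1 + -μ z ^ 2) := Real.sqrt_pos.2 (by nlinarith)
  have hS0 : ((Real.sqrt (1 + -μ z ^ 2) : ℝ) : ℂ) ≠ 0 := by
    simpa using hSpos.ne'
  have hSS : ((Real.sqrt (1 + -μ z ^ 2) : ℝ) : ℂ)
      * ((Real.sqrt (1 + -μ z ^ 2) : ℝ) : ℂ)⁻¹ = 1 := mul_inv_cancel₀ hS0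
  constructor
  · rintro ⟨h1, h2⟩
    constructor
    · linear_combination ((Real.sqrt (1 + -μ z ^ 2) : ℝ) : ℂ)⁻¹ * h1
    · linear_combination ((Real.sqrt (1 + -μ z ^ 2) : ℝ) : ℂ)⁻¹ * h2
  · rintro ⟨h1, h2⟩
    constructor
    · linear_combination ((Real.sqrt (1 + -μ z ^ 2) : ℝ) : ℂ) * h1
        + (-(((1 - ((μ z : ℝ) : ℂ)) * (fderiv ℝ (fun t => (f t).z1) z 1)
            - (1 + ((μ z : ℝ) : ℂ)) * (fderiv ℝ (fun t => (f t).z2) z Complex.I)) / 2)) * hSS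
    · linear_combination ((Real.sqrt (1 + -μ z ^ 2) : ℝ) : ℂ) * h2
        + (-(((1 + ((μ z : ℝ) : ℂ)) * (fderiv ℝ (fun t => (f t).z2) z 1)
            + (1 - ((μ z : ℝ) : ℂ)) * (fderiv ℝ (fun t => (f t).z1) z Complex.I)) / 2)) * hSS

end KeyMain
section Hardy

lemma circleAt_mem_ball {r : ℝ} (hr : r ∈ Set.Ioo (0:ℝ) 1) (θ : ℝ) :
    circleAt r θ ∈ ball (0:ℂ) 1 := by
  rw [mem_ball_zero_iff]
  unfold circleAt
  rw [norm_mul]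
  have : ‖Complex.exp (θ * Complex.I)‖ = 1 := by
    rw [Complex.norm_exp]
    simp
  rw [this, mul_one]
  simpa using by rw [abs_of_pos hr.1]; exact hr.2

lemma continuous_circleAt (r : ℝ) : Continuous (fun θ : ℝ => circleAt r θ) := by
  unfold circleAt
  exact continuous_const.mul (Complex.continuous_exp.comp
    (Complex.continuous_ofReal.mul continuous_const))

lemma hardy_transfer {p K : ℝ} (hp : 0 < p) (hK : 0 ≤ K) {g h : ℂ → Bicomplex}
    (hg1 : ContinuousOn (fun t => (g t).z1) (ball (0:ℂ) 1))
    (hg2 : ContinuousOn (fun t => (g t).z2) (ball (0:ℂ) 1))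
    (hh1 : ContinuousOn (fun t => (h t).z1) (ball (0:ℂ) 1))
    (hh2 : ContinuousOn (fun t => (h t).z2) (ball (0:ℂ) 1))
    (hle : ∀ z ∈ ball (0:ℂ) 1, bnorm (g z) ≤ K * bnorm (h z)) :
    HardyBddB p h → HardyBddB p g := by
  rintro ⟨M, hM⟩
  refine ⟨K ^ p * M, fun r hr => ?_⟩
  have hmem : ∀ θ : ℝ, circleAt r θ ∈ ball (0:ℂ) 1 := circleAt_mem_ball hr
  have hcb : ∀ (u : ℂ → Bicomplex), ContinuousOn (fun t => (u t).z1) (ball (0:ℂ) 1) →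
      ContinuousOn (fun t => (u t).z2) (ball (0:ℂ) 1) →
      Continuous (fun θ : ℝ => bnorm (u (circleAt r θ)) ^ p) := by
    intro u hu1 hu2
    have h1 : Continuous (fun θ : ℝ => (u (circleAt r θ)).z1) :=
      hu1.comp_continuous (continuous_circleAt r) hmem
    have h2 : Continuous (fun θ : ℝ => (u (circleAt r θ)).z2) :=
      hu2.comp_continuous (continuous_circleAt r) hmem
    have hb : Continuous (fun θ : ℝ => bnorm (u (circleAt r θ))) := by
      simp only [bnorm_eq_sqrt]
      exact Real.continuous_sqrt.comp
        (((continuous_norm.comp h1).pow 2).add ((continuous_norm.comp h2).pow 2))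
    exact hb.rpow_const (fun x => Or.inr hp.le)
  have hcg := hcb g hg1 hg2
  have hch := hcb h hh1 hh2
  have hint1 : IntervalIntegrable (fun θ : ℝ => bnorm (g (circleAt r θ)) ^ p)
      MeasureTheory.volume 0 (2 * Real.pi) := hcg.intervalIntegrable _ _
  have hint2 : IntervalIntegrable (fun θ : ℝ => K ^ p * bnorm (h (circleAt r θ)) ^ p)
      MeasureTheory.volume 0 (2 * Real.pi) := (continuous_const.mul hch).intervalIntegrable _ _
  have hmono : (∫ θ in (0:ℝ)..(2 * Real.pi), bnorm (g (circleAt r θ)) ^ p)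
      ≤ ∫ θ in (0:ℝ)..(2 * Real.pi), K ^ p * bnorm (h (circleAt r θ)) ^ p := by
    apply intervalIntegral.integral_mono_on (by positivity) hint1 hint2
    intro θ _
    calc bnorm (g (circleAt r θ)) ^ p ≤ (K * bnorm (h (circleAt r θ))) ^ p :=
          Real.rpow_le_rpow (bnorm_nonneg _) (hle _ (hmem θ)) hp.le
      _ = K ^ p * bnorm (h (circleAt r θ)) ^ p := Real.mul_rpow hK (bnorm_nonneg _)
  refine hmono.trans ?_
  rw [intervalIntegral.integral_const_mul]
  exact mul_le_mul_of_nonneg_left (hM r hr) (Real.rpow_nonneg hK p)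

end Hardy
section Bounds

lemma q_bounds {m c : ℝ} (hc : c < 1) (hμt : |m| ≤ c) :
    (0:ℝ) < 1 - c ∧ 0 < 1 - m ^ 2 ∧ (0:ℝ) < Real.sqrt (1 - m ^ 2) ∧
    1 - c ≤ (Real.sqrt (1 - m ^ 2))⁻¹ * (1 - m) ∧
    1 - c ≤ (Real.sqrt (1 - m ^ 2))⁻¹ * (1 + m) ∧
    (Real.sqrt (1 - m ^ 2))⁻¹ * (1 - m) ≤ (Real.sqrt (1 - c ^ 2))⁻¹ * (1 + c) ∧
    (Real.sqrt (1 - m ^ 2))⁻¹ * (1 + m) ≤ (Real.sqrt (1 - c ^ 2))⁻¹ * (1 + c) := by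
  have hc0 : 0 ≤ c := (abs_nonneg m).trans hμt
  have hm := abs_le.1 hμt
  have h2 : (0:ℝ) < 1 - m ^ 2 := by nlinarith
  have hc2 : (0:ℝ) < 1 - c ^ 2 := by nlinarith
  have hS : (0:ℝ) < Real.sqrt (1 - m ^ 2) := Real.sqrt_pos.2 h2
  have hSc : (0:ℝ) < Real.sqrt (1 - c ^ 2) := Real.sqrt_pos.2 hc2
  have hS1 : Real.sqrt (1 - m ^ 2) ≤ 1 := Real.sqrt_le_one.2 (by nlinarith)
  have hSmono : Real.sqrt (1 - c ^ 2) ≤ Real.sqrt (1 - m ^ 2) :=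
    Real.sqrt_le_sqrt (by nlinarith)
  have hinv1 : (1:ℝ) ≤ (Real.sqrt (1 - m ^ 2))⁻¹ := by
    rw [le_inv_comm₀ one_pos hS]; simpa using hS1
  have hinvmono : (Real.sqrt (1 - m ^ 2))⁻¹ ≤ (Real.sqrt (1 - c ^ 2))⁻¹ :=
    inv_anti₀ hSc hSmono
  refine ⟨by linarith, h2, hS, ?_, ?_, ?_, ?_⟩
  · calc (1:ℝ) - c ≤ 1 - m := by linarith
      _ = 1 * (1 - m) := (one_mul _).symm
      _ ≤ (Real.sqrt (1 - m ^ 2))⁻¹ * (1 - m) :=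
        mul_le_mul_of_nonneg_right hinv1 (by linarith)
  · calc (1:ℝ) - c ≤ 1 + m := by linarith
      _ = 1 * (1 + m) := (one_mul _).symm
      _ ≤ (Real.sqrt (1 - m ^ 2))⁻¹ * (1 + m) :=
        mul_le_mul_of_nonneg_right hinv1 (by linarith)
  · exact mul_le_mul hinvmono (by linarith) (by linarith) (by positivity)
  · exact mul_le_mul hinvmono (by linarith) (by linarith) (by positivity)

variable (μ : ℂ → ℝ) (f : ℂ → Bicomplex)

lemma bnorm_W_le {c : ℝ} (hc : c < 1) (t : ℂ) (hμt : |μ t| ≤ c) :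
    bnorm (ofC ((Real.sqrt (1 - μ t ^ 2))⁻¹ : ℂ) * (f t - ofC (μ t : ℂ) * bconj (f t)))
      ≤ ((Real.sqrt (1 - c ^ 2))⁻¹ * (1 + c)) * bnorm (f t) := by
  obtain ⟨hc1, h2, hS, hq1lo, hq2lo, hq1hi, hq2hi⟩ := q_bounds hc hμt
  rw [bnorm_eq_sqrt, bnorm_eq_sqrt]
  rw [congrFun (W_z1_eq μ f) t, congrFun (W_z2_eq μ f) t]
  rw [norm_mul, norm_mul, Complex.norm_real, Complex.norm_real,
    Real.norm_of_nonneg (by linarith), Real.norm_of_nonneg (by linarith)]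
  exact sqrt_comb (by linarith) (by linarith) hq1hi hq2hi (norm_nonneg _)
    (norm_nonneg _)

lemma bnorm_f_le {c : ℝ} (hc : c < 1) (t : ℂ) (hμt : |μ t| ≤ c) :
    bnorm (f t) ≤ (1 - c)⁻¹
      * bnorm (ofC ((Real.sqrt (1 - μ t ^ 2))⁻¹ : ℂ) * (f t - ofC (μ t : ℂ) * bconj (f t))) := by
  obtain ⟨hc1, h2, hS, hq1lo, hq2lo, hq1hi, hq2hi⟩ := q_bounds hc hμt
  rw [bnorm_eq_sqrt, bnorm_eq_sqrt]
  rw [congrFun (W_z1_eq μ f) t, congrFun (W_z2_eq μ f) t]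
  rw [norm_mul, norm_mul, Complex.norm_real, Complex.norm_real,
    Real.norm_of_nonneg (by linarith), Real.norm_of_nonneg (by linarith)]
  set q1 := (Real.sqrt (1 - μ t ^ 2))⁻¹ * (1 - μ t) with hq1
  set q2 := (Real.sqrt (1 - μ t ^ 2))⁻¹ * (1 + μ t) with hq2
  have hq1pos : 0 < q1 := by linarith
  have hq2pos : 0 < q2 := by linarith
  have e1 : ‖(f t).z1‖ = q1⁻¹ * (q1 * ‖(f t).z1‖) := by
    field_simp
  have e2 : ‖(f t).z2‖ = q2⁻¹ * (q2 * ‖(f t).z2‖) := by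
    field_simp
  conv_lhs => rw [e1, e2]
  exact sqrt_comb (le_of_lt (inv_pos.2 hq1pos)) (le_of_lt (inv_pos.2 hq2pos))
    (inv_anti₀ (by linarith) hq1lo)
    (inv_anti₀ (by linarith) hq2lo)
    (mul_nonneg hq1pos.le (norm_nonneg _)) (mul_nonneg hq2pos.le (norm_nonneg _))

end Bounds
theorem stmt18 (p c : ℝ) (hp : 0 < p) (hc : c < 1) (μ : ℂ → ℝ)
    (hμs : ContDiffOn ℝ 1 μ (ball (0:ℂ) 1))
    (hμb : ∀ z ∈ ball (0:ℂ) 1, |μ z| ≤ c)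
    (f : ℂ → Bicomplex) (hf : ∀ z ∈ ball (0:ℂ) 1, BDiffAt f z) :
    ((∀ z ∈ ball (0:ℂ) 1,
        bdbar f z = ofC (μ z : ℂ) * bdbar (fun t => bconj (f t)) z) ∧
      HardyBddB p f) ↔
    ((∀ z ∈ ball (0:ℂ) 1,
        bdbar (fun t => ofC ((Real.sqrt (1 - μ t ^ 2))⁻¹ : ℂ)
            * (f t - ofC (μ t : ℂ) * bconj (f t))) z
          = (-(ofC (((1 - μ z ^ 2)⁻¹ : ℝ) : ℂ)) * bdbar (fun t => ofC (μ t : ℂ)) z)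
            * bconj (ofC ((Real.sqrt (1 - μ z ^ 2))⁻¹ : ℂ)
              * (f z - ofC (μ z : ℂ) * bconj (f z)))) ∧
      HardyBddB p (fun t => ofC ((Real.sqrt (1 - μ t ^ 2))⁻¹ : ℂ)
        * (f t - ofC (μ t : ℂ) * bconj (f t)))) := by
  have hc0 : 0 ≤ c := (abs_nonneg _).trans (hμb 0 (mem_ball_self one_pos))
  have hμd : ∀ z ∈ ball (0:ℂ) 1, DifferentiableAt ℝ μ z := fun z hz =>
    (hμs.differentiableOn one_ne_zero).differentiableAt (isOpen_ball.mem_nhds hz)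
  have hm : ∀ z ∈ ball (0:ℂ) 1, (μ z) ^ 2 < 1 := fun z hz => by
    have h := hμb z hz
    nlinarith [abs_nonneg (μ z), _root_.sq_abs (μ z)]
  have hf1c : ContinuousOn (fun t => (f t).z1) (ball (0:ℂ) 1) := fun z hz =>
    ((hf z hz).1.continuousAt).continuousWithinAt
  have hf2c : ContinuousOn (fun t => (f t).z2) (ball (0:ℂ) 1) := fun z hz =>
    ((hf z hz).2.continuousAt).continuousWithinAt
  have hμc : ContinuousOn μ (ball (0:ℂ) 1) := hμs.continuousOn
  have hSc : ContinuousOn (fun t => (Real.sqrt (1 - μ t ^ 2))⁻¹) (ball (0:ℂ) 1) := by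
    apply ContinuousOn.inv₀
    · exact Real.continuous_sqrt.comp_continuousOn (continuousOn_const.sub (hμc.pow 2))
    · intro z hz
      exact (Real.sqrt_pos.2 (by nlinarith [hm z hz])).ne'
  have hW1c : ContinuousOn
      (fun t => ((ofC ((Real.sqrt (1 - μ t ^ 2))⁻¹ : ℂ)
        * (f t - ofC (μ t : ℂ) * bconj (f t))).z1)) (ball (0:ℂ) 1) := by
    rw [show (fun t => ((ofC ((Real.sqrt (1 - μ t ^ 2))⁻¹ : ℂ)
        * (f t - ofC (μ t : ℂ) * bconj (f t))).z1))
      = fun t => ((((Real.sqrt (1 - μ t ^ 2))⁻¹ * (1 - μ t) : ℝ) : ℂ) * (f t).z1)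
      from W_z1_eq μ f]
    exact (Complex.continuous_ofReal.comp_continuousOn
      (hSc.mul (continuousOn_const.sub hμc))).mul hf1c
  have hW2c : ContinuousOn
      (fun t => ((ofC ((Real.sqrt (1 - μ t ^ 2))⁻¹ : ℂ)
        * (f t - ofC (μ t : ℂ) * bconj (f t))).z2)) (ball (0:ℂ) 1) := by
    rw [show (fun t => ((ofC ((Real.sqrt (1 - μ t ^ 2))⁻¹ : ℂ)
        * (f t - ofC (μ t : ℂ) * bconj (f t))).z2))
      = fun t => ((((Real.sqrt (1 - μ t ^ 2))⁻¹ * (1 + μ t) : ℝ) : ℂ) * (f t).z2)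
      from W_z2_eq μ f]
    exact (Complex.continuous_ofReal.comp_continuousOn
      (hSc.mul (continuousOn_const.add hμc))).mul hf2c
  have hKf : (0:ℝ) ≤ (Real.sqrt (1 - c ^ 2))⁻¹ * (1 + c) :=
    mul_nonneg (inv_nonneg.2 (Real.sqrt_nonneg _)) (by linarith)
  have hKr : (0:ℝ) ≤ (1 - c)⁻¹ := inv_nonneg.2 (by linarith)
  constructor
  · rintro ⟨heq, hH⟩
    constructor
    · intro z hz
      exact (key μ f z (hμd z hz) (hm z hz) (hf z hz).1 (hf z hz).2).1 (heq z hz)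
    · exact hardy_transfer hp hKf hW1c hW2c hf1c hf2c
        (fun z hz => bnorm_W_le μ f hc z (hμb z hz)) hH
  · rintro ⟨heq, hH⟩
    constructor
    · intro z hz
      exact (key μ f z (hμd z hz) (hm z hz) (hf z hz).1 (hf z hz).2).2 (heq z hz)
    · exact hardy_transfer hp hKr hf1c hf2c hW1c hW2c
        (fun z hz => bnorm_f_le μ f hc z (hμb z hz)) hH

end
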